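/- arXiv:math/0508544 — 3 statements merged into one kernel-verified Lean document; each statement's English description precedes it below -/
import Mathlib

section
/- There exist absolute constants C > 0 and A > 0 such that for every integer n ≥ 1 and every finite Blaschke product B with n zeros a_1, …, a_n in the open unit disk 𝔻, there exists a function φ, holomorphic and zero-free on an open neighborhood of the closed unit disk, satisfying: φ(0) = 1; |φ(z)| ≤ A for all z with |z| = 1; and |(Bφ)'(z)| ≤ C·n for all z with |z| = 1. -/
open Metric


lemma exp_le_inv_one_sub {y : ℝ} (hy : y < 1) : Real.exp y ≤ 1 / (1 - y) := by
  have h := Real.add_one_le_exp (-y)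
  have h1 : 0 < 1 - y := by linarith
  rw [le_div_iff₀ h1]
  calc Real.exp y * (1 - y) ≤ Real.exp y * Real.exp (-y) := by
        apply mul_le_mul_of_nonneg_left _ (Real.exp_pos y).le
        linarith
    _ = 1 := by rw [← Real.exp_add]; simp

lemma exp_half_le_two : Real.exp (1/2 : ℝ) ≤ 2 := by
  nlinarith [Real.exp_one_lt_d9, Real.exp_pos (1/2:ℝ),
    Real.exp_add (1/2:ℝ) (1/2:ℝ), Real.exp_one_gt_d9]

lemma ratio_le_one_add {t s x ρ Q δ : ℝ} (ht0 : 0 < t) (ht1 : t ≤ 1)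
    (hs0 : 0 ≤ s) (hst : s ≤ t) (htsδ : t - s ≤ δ)
    (hx0 : 0 ≤ x) (hρ0 : 0 < ρ) (hQ : -t ≤ Q)
    (hX : x^2 = 1 + t^2 - 2*Q) (hP : t^2 * ρ^2 = t^2 + s^2*t^2 - 2*s*t*Q) :
    x / ρ ≤ 1 + δ := by
  have hδ0 : 0 ≤ δ := by linarith
  have key : x^2 * (1+s)^2 ≤ ρ^2 * (1+t)^2 := by
    have hid : t^2*(ρ^2*(1+t)^2) - t^2*(x^2*(1+s)^2) = 2*t*(t-s)*(1-s*t)*(Q+t) := by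
      linear_combination (1+t)^2 * hP - t^2*(1+s)^2 * hX
    have h4 : 0 ≤ 2*t*(t-s)*(1-s*t)*(Q+t) := by
      apply mul_nonneg
      apply mul_nonneg
      apply mul_nonneg (by linarith) (by linarith)
      · nlinarith
      · linarith
    have ht2 : 0 < t^2 := by positivity
    nlinarith [mul_pos ht2 ht2]
  have key2 : x * (1+s) ≤ ρ * (1+t) := by
    by_contra h
    push_neg at h
    nlinarith [mul_pos (sub_pos.2 h) (show (0:ℝ) < x*(1+s)+ρ*(1+t) by nlinarith)]
  have h5 : (1+t) ≤ (1+s)*(1+δ) := by nlinarith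
  rw [div_le_iff₀ hρ0]
  have h6 : x * (1+s) ≤ ((1+δ)*ρ) * (1+s) := by nlinarith [mul_le_mul_of_nonneg_left h5 hρ0.le]
  exact le_of_mul_le_mul_right h6 (by linarith)
lemma rho_sq_lower {t s x ρ Q δ : ℝ} (ht : 1/2 ≤ t) (ht1 : t ≤ 1)
    (hs : s = t - δ) (hs0 : 0 ≤ s) (hδ : 0 < δ)
    (hX : x^2 = 1 + t^2 - 2*Q) (hP : t^2 * ρ^2 = t^2 + s^2*t^2 - 2*s*t*Q) :
    (1-2*δ)*x^2 + δ*(1-s) ≤ ρ^2 := by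
  have hid : t^2 * ρ^2 = s*t*x^2 + t*(t-s)*(1-s*t) := by
    linear_combination hP - s*t*hX
  have ht0 : 0 < t := by linarith
  have ht2 : 0 < t^2 := by positivity
  subst hs
  have key : t^2*((1-2*δ)*x^2 + δ*(1-(t-δ))) ≤ t^2*ρ^2 := by
    nlinarith [hid, mul_nonneg (mul_nonneg (mul_nonneg (sq_nonneg x) ht0.le) hδ.le)
      (by linarith : (0:ℝ) ≤ 2*t-1),
      mul_nonneg (mul_nonneg ht0.le hδ.le) (by linarith : (0:ℝ) ≤ 1 - t)]
  exact le_of_mul_le_mul_left key ht2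

lemma caseII {x ρ e δ : ℝ} (hx : 0 < x) (hρ : 0 < ρ) (hδ : 0 < δ)
    (hδe : δ ≤ e) (he : e < 1/12)
    (hlb : (1-2*δ)*x^2 + δ*e ≤ ρ^2) :
    x/ρ ≤ Real.exp (4*δ - (e/(x+e)^2)*δ/4) := by
  have he0 : 0 < e := lt_of_lt_of_le hδ hδe
  have hxe : 0 < x + e := by linarith
  set u : ℝ := e/(x+e)^2 with hu
  have hu0 : 0 < u := by positivity
  have huδ1 : u*δ ≤ 1 := by
    have h1 : u ≤ 1/e := by
      rw [hu, div_le_div_iff₀ (by positivity) he0]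
      nlinarith [sq_nonneg x, mul_nonneg hx.le he0.le]
    calc u*δ ≤ (1/e)*δ := by nlinarith
      _ ≤ 1 := by rw [div_mul_eq_mul_div, one_mul, div_le_one he0]; exact hδe
  have step1 : x^2 * Real.exp (u*δ/2) ≤ x^2 + δ*e := by
    rcases le_or_gt (δ*e) (x^2) with hc | hc
    · set w : ℝ := δ*e/x^2 with hw
      have hw1 : w ≤ 1 := by rw [hw, div_le_one (by positivity)]; exact hc
      have hw0 : 0 < w := by positivity
      have huw : u*δ ≤ w := by
        rw [hu, hw, div_mul_eq_mul_div, div_le_div_iff₀ (by positivity) (by positivity)]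
        nlinarith [sq_nonneg x, mul_nonneg (mul_nonneg hδ.le he0.le) (sq_nonneg x),
          mul_nonneg (mul_nonneg hδ.le he0.le) (mul_nonneg hx.le he0.le)]
      have h2 : Real.exp (u*δ/2) ≤ 1/(1 - w/2) :=
        le_trans (Real.exp_le_exp.2 (by linarith)) (exp_le_inv_one_sub (by linarith))
      have h3 : 1/(1 - w/2) ≤ 1 + w := by
        rw [div_le_iff₀ (by linarith)]
        nlinarith
      have h4 : x^2 * (1 + w) = x^2 + δ*e := by
        rw [hw]; field_simp
      nlinarith [sq_nonneg x]
    · have h2 : Real.exp (u*δ/2) ≤ 2 :=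
        le_trans (Real.exp_le_exp.2 (by linarith)) exp_half_le_two
      nlinarith [sq_nonneg x]
  have step2 : x^2 + δ*e ≤ ((1-2*δ)*x^2 + δ*e)*(1+8*δ) := by
    nlinarith [sq_nonneg x, mul_nonneg hδ.le he0.le, mul_pos hδ hδ,
      mul_nonneg (mul_nonneg hδ.le hδ.le) (sq_nonneg x)]
  have step3 : ((1-2*δ)*x^2 + δ*e)*(1+8*δ) ≤ ρ^2 * Real.exp (8*δ) := by
    have h1 : (1:ℝ) + 8*δ ≤ Real.exp (8*δ) := by
      have := Real.add_one_le_exp (8*δ); linarith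
    have h2 : 0 ≤ (1-2*δ)*x^2 + δ*e := by
      nlinarith [sq_nonneg x, mul_nonneg hδ.le he0.le]
    nlinarith [Real.exp_pos (8*δ)]
  have main : x^2 * Real.exp (u*δ/2) ≤ ρ^2 * Real.exp (8*δ) := by
    calc x^2 * Real.exp (u*δ/2) ≤ x^2 + δ*e := step1
      _ ≤ _ := le_trans step2 step3
  -- conclude by taking square roots
  have hE : Real.exp (4*δ - u*δ/4) ^ 2 = Real.exp (8*δ) / Real.exp (u*δ/2) := by
    rw [← Real.exp_nat_mul]
    rw [← Real.exp_sub]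
    congr 1
    push_cast
    ring
  have hsq : (x/ρ)^2 ≤ Real.exp (4*δ - u*δ/4) ^ 2 := by
    rw [hE, div_pow, div_le_div_iff₀ (by positivity) (Real.exp_pos _)]
    calc x^2 * Real.exp (u*δ/2) ≤ ρ^2 * Real.exp (8*δ) := main
      _ = Real.exp (8*δ) * ρ^2 := by ring
  have h0 : 0 ≤ x/ρ := by positivity
  by_contra h
  push_neg at h
  nlinarith [Real.exp_pos (4*δ - u*δ/4)]
open Complex

lemma norm_sq_circle {z : ℂ} (hz : ‖z‖ = 1) : z.re^2 + z.im^2 = 1 := by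
  have h : ‖z‖^2 = Complex.normSq z := by rw [Complex.sq_norm]
  rw [hz] at h
  simpa [Complex.normSq_apply, sq] using h.symm

lemma norm_sub_sq_circle {z a : ℂ} (hz : ‖z‖ = 1) :
    ‖z - a‖^2 = 1 + ‖a‖^2 - 2*((starRingEnd ℂ) a * z).re := by
  have h1 : ‖z-a‖^2 = Complex.normSq (z-a) := by rw [Complex.sq_norm]
  have h2 : ‖a‖^2 = Complex.normSq a := by rw [Complex.sq_norm]
  have h3 := norm_sq_circle hz
  rw [h1, h2]
  simp [Complex.normSq_apply, Complex.mul_re, Complex.sub_re, Complex.sub_im]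
  ring_nf
  linear_combination h3

lemma norm_smul_sub_sq_circle {z a : ℂ} (hz : ‖z‖ = 1) (t s : ℝ) :
    ‖(t:ℂ)*z - (s:ℂ)*a‖^2 = t^2 + s^2*‖a‖^2 - 2*s*t*((starRingEnd ℂ) a * z).re := by
  have h1 : ‖(t:ℂ)*z - (s:ℂ)*a‖^2 = Complex.normSq ((t:ℂ)*z - (s:ℂ)*a) := by
    rw [Complex.sq_norm]
  have h2 : ‖a‖^2 = Complex.normSq a := by rw [Complex.sq_norm]
  have h3 := norm_sq_circle hz
  rw [h1, h2]
  simp [Complex.normSq_apply, Complex.mul_re, Complex.mul_im, Complex.sub_re, Complex.sub_im]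
  ring_nf
  nlinarith [h3]

lemma norm_one_sub_conj_mul {c z : ℂ} (hz : ‖z‖ = 1) :
    ‖1 - (starRingEnd ℂ) c * z‖ = ‖z - c‖ := by
  have hn : Complex.normSq z = 1 := by
    rw [Complex.normSq_eq_norm_sq, hz]; norm_num
  have hz1 : z * (starRingEnd ℂ) z = 1 := by
    rw [Complex.mul_conj, hn]; norm_num
  calc ‖1 - (starRingEnd ℂ) c * z‖ = ‖(starRingEnd ℂ) (1 - (starRingEnd ℂ) c * z)‖ := by
        rw [RCLike.norm_conj]
    _ = ‖(z - c) * (starRingEnd ℂ) z‖ := by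
        congr 1
        rw [map_sub, map_mul, Complex.conj_conj, map_one]
        linear_combination -hz1
    _ = ‖z - c‖ := by
        rw [norm_mul, RCLike.norm_conj, hz, mul_one]

lemma re_ge_neg_norm (w : ℂ) : -‖w‖ ≤ w.re := by
  have := Complex.abs_re_le_norm w
  cases abs_le.1 this with
  | intro h1 h2 => linarith

lemma factor_facts {δ : ℝ} (hδ0 : 0 < δ) (hδ1 : δ ≤ 1) {a z : ℂ} (ha : ‖a‖ < 1)
    (hz : ‖z‖ = 1) {s : ℝ} (hs : s = max (‖a‖ - δ) 0)
    {b : ℂ} (hb : b = ((s/‖a‖ : ℝ):ℂ)*a) :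
    ‖b‖ = s ∧ ‖1 - (starRingEnd ℂ) b * a‖ ≤ 2*(1-s) ∧
    (‖z-a‖+(1-s))/4 ≤ ‖z - b‖ ∧ 0 < ‖z - b‖ ∧
    ‖z - a‖/‖z - b‖ ≤ 1 + δ ∧
    ‖z - a‖/‖z - b‖ ≤ Real.exp (4*δ - ((1-s)/(‖z-a‖+(1-s))^2)*δ/4) := by
  set t := ‖a‖ with hts
  have ht0 : 0 ≤ t := norm_nonneg a
  have hs0 : 0 ≤ s := hs ▸ le_max_right _ _
  have hst : s ≤ t := by rw [hs]; exact max_le (by linarith) ht0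
  have hsd : t - s ≤ δ := by
    have := le_max_left (t - δ) (0:ℝ); rw [← hs] at this; linarith
  have hs1 : s ≤ 1 - δ := by
    rw [hs]; exact max_le (by linarith) (by linarith)
  have he_δ : δ ≤ 1 - s := by linarith
  have he_pos : 0 < 1 - s := by linarith
  have hx_pos : 0 < ‖z - a‖ := by
    have h := norm_sub_norm_le z a
    rw [hz] at h; linarith [ha]
  have hbnorm : ‖b‖ = s := by
    by_cases haz : a = 0
    · have ht00 : t = 0 := by rw [hts, haz, norm_zero]
      have hs' : s = 0 := by
        rw [hs, ht00]; exact max_eq_right (by linarith)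
      simp [hb, haz, hs']
    · have ht0' : 0 < t := norm_pos_iff.2 haz
      rw [hb, norm_mul, Complex.norm_real, Real.norm_of_nonneg (by positivity), ← hts]
      field_simp
  have hab : ‖a - b‖ ≤ δ := by
    by_cases haz : a = 0
    · simp [hb, haz]; linarith
    · have ht0' : 0 < t := norm_pos_iff.2 haz
      have h1 : a - b = (((1 - s/t : ℝ)):ℂ) * a := by
        rw [hb]; push_cast; ring
      have h2 : s/t ≤ 1 := by rw [div_le_one ht0']; exact hst
      rw [h1, norm_mul, Complex.norm_real, Real.norm_of_nonneg (by linarith), ← hts]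
      have : (1 - s/t) * t = t - s := by field_simp
      linarith
  have hρ_e : 1 - s ≤ ‖z - b‖ := by
    have h := norm_sub_norm_le z b
    rw [hz, hbnorm] at h; linarith
  have hρ_pos : 0 < ‖z - b‖ := lt_of_lt_of_le he_pos hρ_e
  have hρ_x : ‖z - a‖ - δ ≤ ‖z - b‖ := by
    have h0 : z - a = (z - b) + (b - a) := by ring
    have h1 : ‖z - a‖ ≤ ‖z - b‖ + ‖b - a‖ := by
      rw [h0]; exact norm_add_le _ _
    rw [norm_sub_rev b a] at h1
    linarith
  have hρ4 : (‖z-a‖+(1-s))/4 ≤ ‖z - b‖ := by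
    rcases le_or_gt (‖z - a‖) (3*(1-s)) with h | h
    · linarith
    · linarith
  have hnum : ‖1 - (starRingEnd ℂ) b * a‖ ≤ 2*(1-s) := by
    by_cases haz : a = 0
    · have ht00 : t = 0 := by rw [hts, haz, norm_zero]
      have hs' : s = 0 := by
        rw [hs, ht00]; exact max_eq_right (by linarith)
      simp [haz, hs']
    · have ht0' : 0 < t := norm_pos_iff.2 haz
      have htc : (t:ℂ) ≠ 0 := Complex.ofReal_ne_zero.2 (ne_of_gt ht0')
      have hconj : (starRingEnd ℂ) b * a = ((s*t : ℝ):ℂ) := by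
        rw [hb, map_mul, Complex.conj_ofReal, mul_assoc]
        have h2 : (starRingEnd ℂ) a * a = ((t^2 : ℝ):ℂ) := by
          rw [mul_comm, Complex.mul_conj, Complex.normSq_eq_norm_sq, ← hts]
        rw [h2, ← Complex.ofReal_mul]
        exact congrArg Complex.ofReal (by field_simp)
      rw [hconj]
      have h3 : (1:ℂ) - ((s*t:ℝ):ℂ) = ((1 - s*t : ℝ):ℂ) := by push_cast; ring
      rw [h3, Complex.norm_real, Real.norm_of_nonneg (by nlinarith [ha])]
      nlinarith [mul_nonneg hs0 (by linarith : (0:ℝ) ≤ 1 - t)]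
  by_cases haz : a = 0
  · have ht00 : t = 0 := by rw [hts, haz, norm_zero]
    have hs' : s = 0 := by
      rw [hs, ht00]; exact max_eq_right (by linarith)
    have hb' : b = 0 := by simp [hb, haz]
    refine ⟨hbnorm, hnum, hρ4, hρ_pos, ?_, ?_⟩
    · rw [haz, hb', sub_zero, hz]
      rw [div_one]
      linarith
    · rw [haz, hb', sub_zero, hz, hs']
      rw [div_one]
      have hexp : (0:ℝ) ≤ 4*δ - ((1-0)/((1:ℝ)+(1-0))^2)*δ/4 := by norm_num; linarith
      calc (1:ℝ) = Real.exp 0 := Real.exp_zero.symm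
        _ ≤ _ := Real.exp_le_exp.2 hexp
  · have ht0' : 0 < t := norm_pos_iff.2 haz
    have htc : (t:ℂ) ≠ 0 := Complex.ofReal_ne_zero.2 (ne_of_gt ht0')
    set Q := ((starRingEnd ℂ) a * z).re with hQ
    have hQt : -t ≤ Q := by
      have h1 : ‖(starRingEnd ℂ) a * z‖ = t := by
        rw [norm_mul, RCLike.norm_conj, hz, mul_one]
      have h2 := re_ge_neg_norm ((starRingEnd ℂ) a * z)
      rw [h1] at h2; exact h2
    have hX : ‖z - a‖^2 = 1 + t^2 - 2*Q := norm_sub_sq_circle hz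
    have htb : (t:ℂ)*(z - b) = (t:ℂ)*z - (s:ℂ)*a := by
      rw [hb]; push_cast; field_simp
    have hnorm_t : t * ‖z - b‖ = ‖(t:ℂ)*z - (s:ℂ)*a‖ := by
      rw [← htb, norm_mul, Complex.norm_real, Real.norm_of_nonneg ht0]
    have hP : t^2*‖z-b‖^2 = t^2 + s^2*t^2 - 2*s*t*Q := by
      have h4 := norm_smul_sub_sq_circle (a := a) hz t s
      calc t^2*‖z-b‖^2 = (t*‖z-b‖)^2 := by ring
        _ = ‖(t:ℂ)*z - (s:ℂ)*a‖^2 := by rw [hnorm_t]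
        _ = t^2 + s^2*t^2 - 2*s*t*Q := by rw [h4, ← hts, ← hQ]
    have hp8 : ‖z - a‖/‖z - b‖ ≤ 1 + δ :=
      ratio_le_one_add ht0' ha.le hs0 hst hsd (norm_nonneg _) hρ_pos hQt hX hP
    refine ⟨hbnorm, hnum, hρ4, hρ_pos, hp8, ?_⟩
    rcases le_or_gt ((1-s)/(‖z-a‖+(1-s))^2) 12 with hu | hu
    · calc ‖z-a‖/‖z-b‖ ≤ 1 + δ := hp8
        _ ≤ Real.exp δ := by linarith [Real.add_one_le_exp δ]
        _ ≤ _ := Real.exp_le_exp.2 (by linarith [mul_le_mul_of_nonneg_right hu hδ0.le])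
    · have hue : (1-s)/(‖z-a‖+(1-s))^2 ≤ 1/(1-s) := by
        rw [div_le_div_iff₀ (by positivity) he_pos]
        have hxx : (1-s)^2 ≤ (‖z-a‖+(1-s))^2 :=
          pow_le_pow_left₀ he_pos.le (by linarith) 2
        nlinarith [hxx]
      have he12 : 1 - s < 1/12 := by
        have h5 : (12:ℝ) < 1/(1-s) := lt_of_lt_of_le hu hue
        rw [lt_div_iff₀ he_pos] at h5
        linarith
      have hseq : s = t - δ := by
        rcases le_or_gt (t - δ) 0 with h | h
        · exfalso
          have h6 : s = 0 := by rw [hs]; exact max_eq_right h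
          rw [h6] at he12; linarith
        · rw [hs]; exact max_eq_left h.le
      have ht2 : 1/2 ≤ t := by linarith
      have hlb := rho_sq_lower ht2 ha.le hseq hs0 hδ0 hX hP
      exact caseII hx_pos hρ_pos hδ0 he_δ he12 hlb


lemma final_bound {SU δ N : ℝ} (hSU0 : 0 ≤ SU) (hδ0 : 0 < δ) (hN : δ*N = 1) (hN0 : 0 < N) :
    32 * Real.exp (5 - SU*δ/4) * SU ≤ 100000 * N := by
  have h1 : Real.exp (5 - SU*δ/4) = Real.exp 5 * Real.exp (-(SU*δ/4)) := by
    rw [← Real.exp_add]; ring_nf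
  have h3 : SU*δ/4 ≤ Real.exp (SU*δ/4) := by
    linarith [Real.add_one_le_exp (SU*δ/4)]
  have h2 : Real.exp (-(SU*δ/4)) * SU ≤ 4/δ := by
    rw [Real.exp_neg, inv_mul_le_iff₀ (Real.exp_pos _)]
    calc SU = (4/δ)*(SU*δ/4) := by field_simp
      _ ≤ (4/δ)*Real.exp (SU*δ/4) := mul_le_mul_of_nonneg_left h3 (by positivity)
      _ = Real.exp (SU*δ/4) * (4/δ) := by ring
  have h5 : Real.exp 5 ≤ 150 := by
    have hlt := Real.exp_one_lt_d9
    have h6 : Real.exp 5 = (Real.exp 1)^5 := by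
      rw [← Real.exp_nat_mul]; norm_num
    rw [h6]
    calc (Real.exp 1)^5 ≤ (2.7182818286:ℝ)^5 :=
        pow_le_pow_left₀ (Real.exp_pos 1).le hlt.le 5
      _ ≤ 150 := by norm_num
  have h7 : (4:ℝ)/δ = 4*N := by
    rw [div_eq_iff (ne_of_gt hδ0)]
    linear_combination (-4)*hN
  calc 32 * Real.exp (5 - SU*δ/4) * SU
      = 32 * Real.exp 5 * (Real.exp (-(SU*δ/4)) * SU) := by rw [h1]; ring
    _ ≤ 32 * Real.exp 5 * (4/δ) := by
        apply mul_le_mul_of_nonneg_left h2 (by positivity)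
    _ = 128 * Real.exp 5 * N := by rw [h7]; ring
    _ ≤ 128 * 150 * N := by nlinarith
    _ ≤ 100000 * N := by nlinarith


/-- Videnskii–Shirokov: there are absolute constants `C, A > 0` such that for every
finite Blaschke product `B` with `n` zeros in the open unit disk there is an outer
(holomorphic and zero-free on a neighborhood of the closed disk) function `φ` with
`φ(0) = 1`, `|φ| ≤ A` on the circle, and `|(Bφ)'| ≤ C n` on the circle. -/
theorem videnskii_shirokov :
    ∃ C > (0 : ℝ), ∃ A > (0 : ℝ), ∀ n : ℕ, 1 ≤ n → ∀ a : Fin n → ℂ,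
      (∀ k, ‖a k‖ < 1) →
      ∃ (φ : ℂ → ℂ) (U : Set ℂ), IsOpen U ∧ closedBall (0 : ℂ) 1 ⊆ U ∧
        DifferentiableOn ℂ φ U ∧ (∀ z ∈ U, φ z ≠ 0) ∧ φ 0 = 1 ∧
        (∀ z : ℂ, ‖z‖ = 1 → ‖φ z‖ ≤ A) ∧
        (∀ z : ℂ, ‖z‖ = 1 →
          ‖deriv (fun w : ℂ =>
              (∏ k, (w - a k) / (1 - (starRingEnd ℂ) (a k) * w)) * φ w) z‖ ≤ C * n) := by

  refine ⟨100000, by norm_num, 3, by norm_num, fun n hn a ha => ?_⟩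
  have hnR : (1:ℝ) ≤ (n:ℝ) := by exact_mod_cast hn
  have hn0 : (0:ℝ) < n := by linarith
  set δ : ℝ := 1/(n:ℝ) with hδdef
  have hδ0 : 0 < δ := by positivity
  have hδ1 : δ ≤ 1 := by rw [hδdef, div_le_one hn0]; exact hnR
  have hδn : δ * n = 1 := by rw [hδdef]; field_simp
  set s : Fin n → ℝ := fun k => max (‖a k‖ - δ) 0 with hsdef
  set b : Fin n → ℂ := fun k => ((s k / ‖a k‖ : ℝ) : ℂ) * a k with hbdef
  have hFF : ∀ z : ℂ, ‖z‖ = 1 → ∀ k, ‖b k‖ = s k ∧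
      ‖1 - (starRingEnd ℂ) (b k) * (a k)‖ ≤ 2*(1-s k) ∧
      (‖z-a k‖+(1-s k))/4 ≤ ‖z - b k‖ ∧ 0 < ‖z - b k‖ ∧
      ‖z - a k‖/‖z - b k‖ ≤ 1 + δ ∧
      ‖z - a k‖/‖z - b k‖ ≤ Real.exp (4*δ - ((1-s k)/(‖z-a k‖+(1-s k))^2)*δ/4) :=
    fun z hz k => factor_facts hδ0 hδ1 (ha k) hz rfl rfl
  have hsk : ∀ k, s k ≤ ‖a k‖ := fun k => max_le (by linarith) (norm_nonneg _)
  have hek : ∀ k, δ ≤ 1 - s k := by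
    intro k
    have h1 : s k ≤ 1 - δ := max_le (by linarith [ha k]) (by linarith)
    linarith
  have hsb : ∀ k, ‖b k‖ ≤ ‖a k‖ := by
    intro k
    rw [(hFF 1 (by norm_num) k).1]
    exact hsk k
  have hFin : (Finset.univ : Finset (Fin n)).Nonempty := ⟨⟨0, hn⟩, Finset.mem_univ _⟩
  set M : ℝ := Finset.univ.sup' hFin (fun k => ‖a k‖) with hMdef
  have hMk : ∀ k, ‖a k‖ ≤ M := by
    intro k
    rw [hMdef]
    exact Finset.le_sup' (fun k => ‖a k‖) (Finset.mem_univ k)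
  have hM1 : M < 1 := by
    rw [hMdef, Finset.sup'_lt_iff]
    exact fun k _ => ha k
  have hM0 : 0 ≤ M := le_trans (norm_nonneg _) (hMk ⟨0, hn⟩)
  set U : Set ℂ := ball (0:ℂ) ((3 - M)/2) with hUdef
  have hUsub : closedBall (0:ℂ) 1 ⊆ U := closedBall_subset_ball (by linarith)
  have hwa : ∀ w ∈ U, ∀ c : ℂ, ‖c‖ ≤ M → (1 : ℂ) - (starRingEnd ℂ) c * w ≠ 0 := by
    intro w hw c hc h
    have hwn : ‖w‖ < (3 - M)/2 := by
      rw [hUdef, mem_ball_zero_iff] at hw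
      exact hw
    rw [sub_eq_zero] at h
    have h2 : ‖(starRingEnd ℂ) c * w‖ < 1 := by
      rw [norm_mul, RCLike.norm_conj]
      calc ‖c‖*‖w‖ ≤ M * ‖w‖ := mul_le_mul_of_nonneg_right hc (norm_nonneg w)
        _ < 1 := by nlinarith [norm_nonneg w]
    rw [← h] at h2
    simp at h2
  have hda : ∀ w ∈ U, ∀ k, (1:ℂ) - (starRingEnd ℂ) (a k) * w ≠ 0 :=
    fun w hw k => hwa w hw _ (hMk k)
  have hdb : ∀ w ∈ U, ∀ k, (1:ℂ) - (starRingEnd ℂ) (b k) * w ≠ 0 :=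
    fun w hw k => hwa w hw _ (le_trans (hsb k) (hMk k))
  refine ⟨fun w => ∏ k, (1 - (starRingEnd ℂ) (a k) * w)/(1 - (starRingEnd ℂ) (b k) * w),
    U, isOpen_ball, hUsub, ?_, ?_, ?_, ?_, ?_⟩
  · -- differentiability
    intro w hw
    apply DifferentiableAt.differentiableWithinAt
    apply DifferentiableAt.fun_finsetProd
    intro k _
    exact ((differentiableAt_const _).sub ((differentiableAt_id.const_mul _))).div
      ((differentiableAt_const _).sub ((differentiableAt_id.const_mul _))) (hdb w hw k)
  · -- zero-free
    intro w hw
    rw [Finset.prod_ne_zero_iff]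
    exact fun k _ => div_ne_zero (hda w hw k) (hdb w hw k)
  · -- value 1 at 0
    simp
  · -- bound on circle
    intro z hz
    rw [norm_prod]
    calc ∏ k, ‖(1 - (starRingEnd ℂ) (a k) * z)/(1 - (starRingEnd ℂ) (b k) * z)‖
        ≤ ∏ _k : Fin n, (1+δ) := by
          refine Finset.prod_le_prod (fun k _ => norm_nonneg _) (fun k _ => ?_)
          rw [norm_div, norm_one_sub_conj_mul hz, norm_one_sub_conj_mul hz]
          exact (hFF z hz k).2.2.2.2.1
      _ = (1+δ)^n := by rw [Finset.prod_const, Finset.card_univ, Fintype.card_fin]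
      _ ≤ Real.exp δ ^ n :=
          pow_le_pow_left₀ (by linarith) (by linarith [Real.add_one_le_exp δ]) n
      _ = Real.exp (δ * n) := by rw [← Real.exp_nat_mul]; ring_nf
      _ = Real.exp 1 := by rw [hδn]
      _ ≤ 3 := by linarith [Real.exp_one_lt_d9]
  · -- derivative bound
    intro z hz
    have hzU : z ∈ U := hUsub (by rw [mem_closedBall_zero_iff, hz])
    set g : Fin n → ℂ → ℂ := fun k w => (w - a k)/(1 - (starRingEnd ℂ) (b k) * w) with hgdef
    set D : Fin n → ℂ :=
      fun k => (1 - (starRingEnd ℂ) (b k) * (a k))/(1 - (starRingEnd ℂ) (b k) * z)^2 with hDdef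
    have hder : ∀ k, HasDerivAt (g k) (D k) z := by
      intro k
      have h1 : HasDerivAt (fun w : ℂ => w - a k) 1 z := (hasDerivAt_id z).sub_const _
      have h2 : HasDerivAt (fun w : ℂ => 1 - (starRingEnd ℂ) (b k) * w)
          (-((starRingEnd ℂ) (b k))) z := by
        simpa using ((hasDerivAt_id z).const_mul ((starRingEnd ℂ) (b k))).const_sub 1
      have h4 := h1.div h2 (hdb z hzU k)
      refine h4.congr_deriv ?_
      rw [hDdef]
      congr 1
      ring
    have hprod := HasDerivAt.fun_finsetProd (u := Finset.univ) (f := g) (f' := D)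
      (fun k _ => hder k)
    have hFG : Set.EqOn (fun w : ℂ => (∏ k, (w - a k) / (1 - (starRingEnd ℂ) (a k) * w)) *
        ∏ k, (1 - (starRingEnd ℂ) (a k) * w)/(1 - (starRingEnd ℂ) (b k) * w))
        (fun w => ∏ k, g k w) U := by
      intro w hw
      simp only
      rw [← Finset.prod_mul_distrib]
      refine Finset.prod_congr rfl (fun k _ => ?_)
      rw [hgdef]
      rw [div_mul_div_comm,
        mul_comm ((1:ℂ) - (starRingEnd ℂ) (a k) * w) ((1:ℂ) - (starRingEnd ℂ) (b k) * w),
        mul_div_mul_right _ _ (hda w hw k)]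
    have hd_eq : deriv (fun w : ℂ => (∏ k, (w - a k) / (1 - (starRingEnd ℂ) (a k) * w)) *
        ∏ k, (1 - (starRingEnd ℂ) (a k) * w)/(1 - (starRingEnd ℂ) (b k) * w)) z =
        ∑ k, (∏ j ∈ Finset.univ.erase k, g j z) • D k := by
      rw [Filter.EventuallyEq.deriv_eq
        (Filter.eventuallyEq_of_mem (isOpen_ball.mem_nhds hzU) hFG)]
      exact hprod.deriv
    rw [hd_eq]
    set u : Fin n → ℝ := fun k => (1-s k)/(‖z-a k‖+(1-s k))^2 with hudef
    have hu0 : ∀ k, 0 ≤ u k := by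
      intro k
      have := hek k
      have hx0 := norm_nonneg (z - a k)
      apply div_nonneg (by linarith) (sq_nonneg _)
    have huδ : ∀ k, u k * δ ≤ 1 := by
      intro k
      have he := hek k
      have hx0 := norm_nonneg (z - a k)
      have h1 : u k ≤ 1/(1 - s k) := by
        rw [hudef]
        simp only
        rw [div_le_div_iff₀ (pow_pos (by linarith) 2) (by linarith)]
        have hxx : (1-s k)^2 ≤ (‖z-a k‖+(1-s k))^2 :=
          pow_le_pow_left₀ (by linarith) (by linarith) 2
        nlinarith [hxx]
      calc u k * δ ≤ (1/(1-s k)) * δ := mul_le_mul_of_nonneg_right h1 hδ0.le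
        _ = δ/(1-s k) := by ring
        _ ≤ 1 := by rw [div_le_one (by linarith)]; linarith
    have hD32 : ∀ k, ‖D k‖ ≤ 32 * u k := by
      intro k
      obtain ⟨hb1, hnum, hρ4, hρpos, _, _⟩ := hFF z hz k
      rw [hDdef]
      simp only
      rw [norm_div, norm_pow, norm_one_sub_conj_mul hz]
      have he := hek k
      have hx0 := norm_nonneg (z - a k)
      have hxe : (0:ℝ) < (‖z-a k‖+(1-s k))/4 := by linarith
      have hρ2 : ((‖z-a k‖+(1-s k))/4)^2 ≤ ‖z - b k‖^2 := pow_le_pow_left₀ hxe.le hρ4 2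
      calc ‖1 - (starRingEnd ℂ) (b k) * (a k)‖/‖z-b k‖^2
          ≤ (2*(1-s k))/(((‖z-a k‖+(1-s k))/4)^2) :=
            div_le_div₀ (by linarith) hnum (by positivity) hρ2
        _ = 32 * u k := by
            rw [hudef]
            simp only
            have hne : (‖z-a k‖+(1-s k)) ≠ 0 := by linarith
            field_simp
            all_goals ring
    have hp9 : ∀ j, ‖z-a j‖/‖z-b j‖ ≤ Real.exp (4*δ - u j*δ/4) := by
      intro j
      have h := (hFF z hz j).2.2.2.2.2
      rw [hudef]
      simp only
      convert h using 3
      all_goals ring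
    have hgnorm : ∀ j, ‖g j z‖ = ‖z-a j‖/‖z-b j‖ := by
      intro j
      rw [hgdef]
      simp only
      rw [norm_div, norm_one_sub_conj_mul hz]
    set SU : ℝ := ∑ j, u j with hSUdef
    have hSU0 : 0 ≤ SU := Finset.sum_nonneg (fun j _ => hu0 j)
    have hstep : ∀ k, ‖∏ j ∈ Finset.univ.erase k, g j z‖ ≤ Real.exp (5 - SU*δ/4) := by
      intro k
      rw [norm_prod]
      calc ∏ j ∈ Finset.univ.erase k, ‖g j z‖
          ≤ ∏ j ∈ Finset.univ.erase k, Real.exp (4*δ - u j*δ/4) := by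
            refine Finset.prod_le_prod (fun j _ => norm_nonneg _) (fun j _ => ?_)
            rw [hgnorm j]
            exact hp9 j
        _ = Real.exp (∑ j ∈ Finset.univ.erase k, (4*δ - u j*δ/4)) :=
            (Real.exp_sum _ _).symm
        _ ≤ Real.exp (5 - SU*δ/4) := by
            apply Real.exp_le_exp.2
            rw [Finset.sum_erase_eq_sub (Finset.mem_univ k)]
            have hsum : ∑ j, (4*δ - u j*δ/4) = (n:ℝ)*(4*δ) - SU*δ/4 := by
              rw [Finset.sum_sub_distrib, Finset.sum_const, Finset.card_univ,
                Fintype.card_fin, nsmul_eq_mul]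
              congr 1
              rw [hSUdef, Finset.sum_mul, Finset.sum_div]
            rw [hsum]
            have h1 : (n:ℝ)*(4*δ) = 4 := by
              calc (n:ℝ)*(4*δ) = 4*(δ*n) := by ring
                _ = 4 := by rw [hδn]; norm_num
            have h2 : u k * δ ≤ 1 := huδ k
            have h3 : 0 ≤ 4*δ := by linarith
            linarith
    calc ‖∑ k, (∏ j ∈ Finset.univ.erase k, g j z) • D k‖
        ≤ ∑ k, ‖(∏ j ∈ Finset.univ.erase k, g j z) • D k‖ := norm_sum_le _ _
      _ = ∑ k, ‖∏ j ∈ Finset.univ.erase k, g j z‖ * ‖D k‖ := by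
          simp [norm_smul]
      _ ≤ ∑ k, Real.exp (5 - SU*δ/4) * (32 * u k) := by
          refine Finset.sum_le_sum (fun k _ => ?_)
          exact mul_le_mul (hstep k) (hD32 k) (norm_nonneg _) (Real.exp_pos _).le
      _ = 32 * Real.exp (5 - SU*δ/4) * SU := by
          rw [hSUdef, Finset.mul_sum]
          refine Finset.sum_congr rfl (fun k _ => ?_)
          ring
      _ ≤ 100000 * n := final_bound hSU0 hδ0 hδn hn0
end

section
/- For every ε > 0 there exists a constant C_ε > 0 such that for every integer n ≥ 1 and every finite Blaschke product B with n zeros a_1, …, a_n in the open unit disk 𝔻, there exists a function φ, holomorphic and zero-free on an open neighborhood of the closed unit disk, satisfying: φ(0) = 1; |φ(z)| ≤ 1 + ε for all z with |z| = 1; and |(Bφ)'(z)| ≤ C_ε·n for all z with |z| = 1. -/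
open Metric Complex

private lemma nsq_aux (t : ℝ) (a z : ℂ) :
    ‖1 - (t:ℂ) * ((starRingEnd ℂ) a) * z‖^2
      = 1 + t^2 * (‖a‖^2 * ‖z‖^2) - 2*(t*((z * (starRingEnd ℂ) a).re)) := by
  simp only [Complex.sq_norm]
  rw [Complex.normSq_sub]
  simp only [Complex.normSq_one, Complex.normSq_mul, Complex.normSq_conj,
    Complex.normSq_ofReal, one_mul, map_mul, Complex.conj_conj, Complex.conj_ofReal]
  have h1 : ((t:ℂ) * a * (starRingEnd ℂ) z).re = t * ((z * (starRingEnd ℂ) a).re) := by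
    rw [mul_assoc, Complex.re_ofReal_mul]
    congr 1
    rw [← Complex.conj_re (a * (starRingEnd ℂ) z)]
    simp [mul_comm]
  rw [h1]
  ring

private lemma nsub_aux (w a : ℂ) :
    ‖w - a‖^2 = ‖w‖^2 + ‖a‖^2 - 2*((w * (starRingEnd ℂ) a).re) := by
  simp only [Complex.sq_norm]
  rw [Complex.normSq_sub]

private lemma u_bound (w a : ℂ) : |(w * (starRingEnd ℂ) a).re| ≤ ‖a‖ * ‖w‖ := by
  calc |(w * (starRingEnd ℂ) a).re| ≤ ‖w * (starRingEnd ℂ) a‖ :=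
        Complex.abs_re_le_norm _
    _ = ‖a‖ * ‖w‖ := by
        rw [norm_mul, RingHomIsometric.norm_map]
        ring

private lemma real_factor (β r W u : ℝ) (hβ0 : 0 < β) (hβ : β ≤ 1/2)
    (hr0 : 0 ≤ r) (hr : r ≤ 1) (hW0 : 0 ≤ W) (hW : W ≤ 1 + β/4)
    (hu1 : u ≤ r*W) :
    W^2 + r^2 - 2*u ≤ (1+β)^2 * (1 + (1-β)^2*(r^2*W^2) - 2*((1-β)*u)) := by
  have g1 : W - r ≤ (1+β) * (1 - (1-β)*r*W) := by
    nlinarith [mul_nonneg hr0 hW0, mul_nonneg (mul_nonneg hβ0.le hβ0.le) (mul_nonneg hr0 hW0),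
      mul_nonneg hr0 (sub_nonneg.2 hW), mul_nonneg hβ0.le hr0]
  have g2 : r - W ≤ (1+β) * (1 - (1-β)*r*W) := by
    nlinarith [mul_nonneg hr0 hW0, mul_nonneg (mul_nonneg hβ0.le hβ0.le) (mul_nonneg hr0 hW0),
      mul_nonneg (sub_nonneg.2 hr) hW0, mul_nonneg hβ0.le (mul_nonneg hr0 hW0)]
  have h3 : (W - r)^2 ≤ ((1+β) * (1 - (1-β)*r*W))^2 := sq_le_sq' (by linarith) g1
  have h4 : 0 ≤ ((1-β)*(1+β)^2 - 1) * (r*W - u) := by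
    apply mul_nonneg _ (by linarith)
    nlinarith [mul_nonneg hβ0.le hβ0.le, mul_nonneg (mul_nonneg hβ0.le hβ0.le) hβ0.le]
  nlinarith [h3, h4]

/-- one minus a small complex number is nonzero -/
private lemma one_sub_ne (x : ℂ) (h : ‖x‖ < 1) : (1:ℂ) - x ≠ 0 := by
  intro hx
  rw [sub_eq_zero] at hx
  rw [← hx] at h
  simp at h

/-- key sphere bound for a single factor -/
private lemma factor_sphere (β : ℝ) (hβ0 : 0 < β) (hβ : β ≤ 1/2) (a w : ℂ)
    (ha : ‖a‖ ≤ 1) (hw : ‖w‖ ≤ 1 + β/4) :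
    ‖w - a‖ ≤ (1+β) * ‖1 - ((1-β : ℝ):ℂ) * ((starRingEnd ℂ) a) * w‖ := by
  have key : ‖w - a‖^2 ≤ ((1+β) * ‖1 - ((1-β : ℝ):ℂ) * ((starRingEnd ℂ) a) * w‖)^2 := by
    rw [mul_pow, nsub_aux, nsq_aux]
    have hu := u_bound w a
    exact real_factor β ‖a‖ ‖w‖ _ hβ0 hβ (norm_nonneg a) ha (norm_nonneg w) hw
      (le_trans (le_abs_self _) (by rw [mul_comm ‖a‖ ‖w‖] at hu ⊢; linarith [hu]))
  have h0 : (0:ℝ) ≤ (1+β) * ‖1 - ((1-β : ℝ):ℂ) * ((starRingEnd ℂ) a) * w‖ :=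
    mul_nonneg (by linarith) (norm_nonneg _)
  exact (pow_le_pow_iff_left₀ (norm_nonneg _) h0 two_ne_zero).1 key

/-- circle bound for a single factor -/
private lemma factor_circle (β : ℝ) (hβ0 : 0 < β) (hβ1 : β ≤ 1/2) (a z : ℂ)
    (ha : ‖a‖ ≤ 1) (hz : ‖z‖ = 1) :
    (1-β) * ‖1 - ((1:ℝ):ℂ) * ((starRingEnd ℂ) a) * z‖^2
      ≤ ‖1 - ((1-β : ℝ):ℂ) * ((starRingEnd ℂ) a) * z‖^2 := by
  rw [nsq_aux, nsq_aux, hz]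
  have hu := u_bound z a
  have hA : ‖a‖^2 ≤ 1 := by nlinarith [norm_nonneg a]
  have h2 : (0:ℝ) ≤ 1 - (1-β)*‖a‖^2 := by nlinarith [sq_nonneg ‖a‖]
  nlinarith [mul_nonneg hβ0.le h2]

set_option maxHeartbeats 1000000 in
/-- For every `ε > 0` there is `C_ε > 0` such that for every finite Blaschke product `B`
with `n` zeros in the open unit disk there is a function `φ`, holomorphic and zero-free
on a neighborhood of the closed disk, with `φ(0) = 1`, `|φ| ≤ 1 + ε` on the circle and
`|(Bφ)'| ≤ C_ε n` on the circle. -/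
theorem videnskii_shirokov_eps (ε : ℝ) (hε : 0 < ε) :
    ∃ C > (0 : ℝ), ∀ n : ℕ, 1 ≤ n → ∀ a : Fin n → ℂ,
      (∀ k, ‖a k‖ < 1) →
      ∃ (φ : ℂ → ℂ) (U : Set ℂ), IsOpen U ∧ closedBall (0 : ℂ) 1 ⊆ U ∧
        DifferentiableOn ℂ φ U ∧ (∀ z ∈ U, φ z ≠ 0) ∧ φ 0 = 1 ∧
        (∀ z : ℂ, ‖z‖ = 1 → ‖φ z‖ ≤ 1 + ε) ∧
        (∀ z : ℂ, ‖z‖ = 1 →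
          ‖deriv (fun w : ℂ =>
              (∏ k, (w - a k) / (1 - (starRingEnd ℂ) (a k) * w)) * φ w) z‖ ≤ C * n) := by
  set δ : ℝ := min (1/2) (ε/4) with hδdef
  have hδ0 : 0 < δ := lt_min (by norm_num) (by linarith)
  have hδ2 : δ ≤ 1/2 := min_le_left _ _
  have hδε : δ ≤ ε/4 := min_le_right _ _
  refine ⟨8/δ, by positivity, ?_⟩
  intro n hn a ha
  have hn0 : (0:ℝ) < (n:ℝ) := by exact_mod_cast Nat.pos_of_ne_zero (by omega)
  have hn1 : (1:ℝ) ≤ (n:ℝ) := by exact_mod_cast hn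
  set β : ℝ := δ / n with hβdef
  have hβ0 : 0 < β := div_pos hδ0 hn0
  have hβδ : β ≤ δ := by
    rw [hβdef]; exact div_le_self hδ0.le hn1
  have hβ2 : β ≤ 1/2 := hβδ.trans hδ2
  have hnβ : (n:ℝ) * β = δ := by rw [hβdef]; field_simp
  set ρ : ℝ := 1 - β with hρdef
  have hρ0 : 0 < ρ := by simp only [hρdef]; linarith
  have hρ1 : ρ < 1 := by simp only [hρdef]; linarith
  -- the function and the domain
  refine ⟨fun w => ∏ k, (1 - (starRingEnd ℂ) (a k) * w) / (1 - (ρ:ℂ) * (starRingEnd ℂ) (a k) * w),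
    {w : ℂ | ∀ k, (1 - (starRingEnd ℂ) (a k) * w ≠ 0 ∧ 1 - (ρ:ℂ) * (starRingEnd ℂ) (a k) * w ≠ 0)},
    ?_, ?_, ?_, ?_, ?_, ?_, ?_⟩
  · -- open
    have : {w : ℂ | ∀ k, (1 - (starRingEnd ℂ) (a k) * w ≠ 0 ∧
        1 - (ρ:ℂ) * (starRingEnd ℂ) (a k) * w ≠ 0)}
        = ⋂ k, ({w : ℂ | 1 - (starRingEnd ℂ) (a k) * w ≠ 0}
          ∩ {w : ℂ | 1 - (ρ:ℂ) * (starRingEnd ℂ) (a k) * w ≠ 0}) := by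
      ext w
      simp only [Set.mem_setOf_eq, Set.mem_iInter, Set.mem_inter_iff]
    rw [this]
    refine isOpen_iInter_of_finite fun k => (IsOpen.inter ?_ ?_)
    · exact isOpen_compl_singleton.preimage (by fun_prop)
    · exact isOpen_compl_singleton.preimage (by fun_prop)
  · -- closed ball subset
    intro w hw k
    rw [mem_closedBall, dist_zero_right] at hw
    constructor
    · refine one_sub_ne _ ?_
      rw [norm_mul, RingHomIsometric.norm_map]
      calc ‖a k‖ * ‖w‖ ≤ ‖a k‖ * 1 := by
            exact mul_le_mul_of_nonneg_left hw (norm_nonneg _)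
        _ < 1 := by rw [mul_one]; exact ha k
    · refine one_sub_ne _ ?_
      rw [norm_mul, norm_mul, RingHomIsometric.norm_map, Complex.norm_real,
        Real.norm_eq_abs, abs_of_pos hρ0]
      calc ρ * ‖a k‖ * ‖w‖ ≤ ρ * 1 * 1 := by
            refine mul_le_mul (mul_le_mul_of_nonneg_left (ha k).le hρ0.le) hw
              (norm_nonneg _) (by positivity)
        _ = ρ := by ring
        _ < 1 := hρ1
  · -- differentiable
    intro w hw
    refine DifferentiableAt.differentiableWithinAt ?_
    refine DifferentiableAt.fun_finsetProd fun k _ => ?_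
    exact DifferentiableAt.div (by fun_prop) (by fun_prop) (hw k).2
  · -- nonvanishing
    intro z hz
    refine Finset.prod_ne_zero_iff.2 fun k _ => ?_
    exact div_ne_zero (hz k).1 (hz k).2
  · -- value at 0
    simp
  · -- circle bound
    intro z hz
    simp only []
    have hden : ∀ k : Fin n, (1:ℂ) - (ρ:ℂ) * (starRingEnd ℂ) (a k) * z ≠ 0 := by
      intro k
      refine one_sub_ne _ ?_
      rw [norm_mul, norm_mul, RingHomIsometric.norm_map, Complex.norm_real,
        Real.norm_eq_abs, abs_of_pos hρ0, hz]
      nlinarith [ha k, norm_nonneg (a k)]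
    have hfac : ∀ k : Fin n,
        ‖(1 - (starRingEnd ℂ) (a k) * z) / (1 - (ρ:ℂ) * (starRingEnd ℂ) (a k) * z)‖^2 ≤ 1/ρ := by
      intro k
      rw [norm_div, div_pow]
      rw [div_le_div_iff₀ (pow_pos (norm_pos_iff.mpr (hden k)) 2) hρ0]
      have h2 := factor_circle β hβ0 hβ2 (a k) z (ha k).le hz
      have e1 : (1:ℂ) - (starRingEnd ℂ) (a k) * z = 1 - ((1:ℝ):ℂ) * (starRingEnd ℂ) (a k) * z := by
        norm_num
      rw [← hρdef] at h2
      rw [e1]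
      linarith [h2]
    have hnorm : ‖∏ k : Fin n, (1 - (starRingEnd ℂ) (a k) * z) /
        (1 - (ρ:ℂ) * (starRingEnd ℂ) (a k) * z)‖^2
        = ∏ k : Fin n, ‖(1 - (starRingEnd ℂ) (a k) * z) /
          (1 - (ρ:ℂ) * (starRingEnd ℂ) (a k) * z)‖^2 := by
      rw [norm_prod, Finset.prod_pow]
    have hprod : ∏ k : Fin n, ‖(1 - (starRingEnd ℂ) (a k) * z) /
          (1 - (ρ:ℂ) * (starRingEnd ℂ) (a k) * z)‖^2 ≤ (1/ρ)^n := by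
      calc ∏ k : Fin n, ‖(1 - (starRingEnd ℂ) (a k) * z) /
          (1 - (ρ:ℂ) * (starRingEnd ℂ) (a k) * z)‖^2
          ≤ ∏ _k : Fin n, (1/ρ) :=
            Finset.prod_le_prod (fun k _ => by positivity) (fun k _ => hfac k)
        _ = (1/ρ)^n := by rw [Finset.prod_const, Finset.card_fin]
    have hρn : 1 - δ ≤ ρ^n := by
      have := one_add_mul_le_pow (a := -β) (by linarith) n
      simp only [hρdef]
      calc 1 - δ = 1 + (n:ℝ) * (-β) := by rw [← hnβ]; ring
        _ ≤ (1 + (-β))^n := this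
        _ = (1 - β)^n := by rw [← sub_eq_add_neg]
    have hδ1 : (0:ℝ) < 1 - δ := by linarith
    have hfin : (1/ρ)^n ≤ (1+ε)^2 := by
      rw [one_div_pow]
      calc 1/ρ^n ≤ 1/(1-δ) := by
            apply one_div_le_one_div_of_le hδ1 hρn
        _ ≤ (1+ε)^2 := by
            rw [div_le_iff₀ hδ1]
            nlinarith [mul_nonneg hε.le hδ0.le, mul_nonneg (mul_nonneg hε.le hε.le) hδ0.le]
    have hsq : ‖∏ k : Fin n, (1 - (starRingEnd ℂ) (a k) * z) /
        (1 - (ρ:ℂ) * (starRingEnd ℂ) (a k) * z)‖^2 ≤ (1+ε)^2 := by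
      rw [hnorm]; exact hprod.trans hfin
    exact (pow_le_pow_iff_left₀ (norm_nonneg _) (by linarith) two_ne_zero).1 hsq
  · -- derivative bound
    intro z hz
    set G : ℂ → ℂ := fun w => ∏ k, (w - a k) / (1 - (ρ:ℂ) * (starRingEnd ℂ) (a k) * w) with hG
    have hdenR : ∀ w : ℂ, ‖w‖ ≤ 1 + β/4 → ∀ k,
        (1:ℂ) - (ρ:ℂ) * (starRingEnd ℂ) (a k) * w ≠ 0 := by
      intro w hw k
      refine one_sub_ne _ ?_
      rw [norm_mul, norm_mul, RingHomIsometric.norm_map, Complex.norm_real,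
        Real.norm_eq_abs, abs_of_pos hρ0]
      calc ρ * ‖a k‖ * ‖w‖ ≤ ρ * 1 * (1 + β/4) := by
            refine mul_le_mul (mul_le_mul_of_nonneg_left (ha k).le hρ0.le) hw
              (norm_nonneg _) (by positivity)
        _ < 1 := by rw [hρdef]; nlinarith
    -- eventual equality with G near z
    have hVopen : IsOpen {w : ℂ | ∀ k, ((1:ℂ) - (starRingEnd ℂ) (a k) * w ≠ 0 ∧
        (1:ℂ) - (ρ:ℂ) * (starRingEnd ℂ) (a k) * w ≠ 0)} := by
      have : {w : ℂ | ∀ k, ((1:ℂ) - (starRingEnd ℂ) (a k) * w ≠ 0 ∧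
          (1:ℂ) - (ρ:ℂ) * (starRingEnd ℂ) (a k) * w ≠ 0)}
          = ⋂ k, ({w : ℂ | (1:ℂ) - (starRingEnd ℂ) (a k) * w ≠ 0}
            ∩ {w : ℂ | (1:ℂ) - (ρ:ℂ) * (starRingEnd ℂ) (a k) * w ≠ 0}) := by
        ext w
        simp only [Set.mem_setOf_eq, Set.mem_iInter, Set.mem_inter_iff]
      rw [this]
      refine isOpen_iInter_of_finite fun k => (IsOpen.inter ?_ ?_)
      · exact isOpen_compl_singleton.preimage (by fun_prop)
      · exact isOpen_compl_singleton.preimage (by fun_prop)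
    have hzV : z ∈ {w : ℂ | ∀ k, ((1:ℂ) - (starRingEnd ℂ) (a k) * w ≠ 0 ∧
        (1:ℂ) - (ρ:ℂ) * (starRingEnd ℂ) (a k) * w ≠ 0)} := by
      intro k
      constructor
      · refine one_sub_ne _ ?_
        rw [norm_mul, RingHomIsometric.norm_map, hz, mul_one]
        exact ha k
      · exact hdenR z (by rw [hz]; nlinarith) k
    have hFG : ∀ w ∈ {w : ℂ | ∀ k, ((1:ℂ) - (starRingEnd ℂ) (a k) * w ≠ 0 ∧
        (1:ℂ) - (ρ:ℂ) * (starRingEnd ℂ) (a k) * w ≠ 0)},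
        (∏ k, (w - a k) / (1 - (starRingEnd ℂ) (a k) * w)) *
          (∏ k, (1 - (starRingEnd ℂ) (a k) * w) / (1 - (ρ:ℂ) * (starRingEnd ℂ) (a k) * w))
          = G w := by
      intro w hw
      rw [hG]
      simp only []
      rw [← Finset.prod_mul_distrib]
      refine Finset.prod_congr rfl fun k _ => ?_
      rw [div_mul_div_comm, mul_comm (w - a k) (1 - (starRingEnd ℂ) (a k) * w),
        mul_div_mul_left _ _ (hw k).1]
    have hev : (fun w : ℂ => (∏ k, (w - a k) / (1 - (starRingEnd ℂ) (a k) * w)) *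
        (∏ k, (1 - (starRingEnd ℂ) (a k) * w) / (1 - (ρ:ℂ) * (starRingEnd ℂ) (a k) * w)))
        =ᶠ[nhds z] G :=
      Filter.eventuallyEq_of_mem (hVopen.mem_nhds hzV) hFG
    rw [Filter.EventuallyEq.deriv_eq hev]
    -- Cauchy estimate
    set d : ℝ := β/4 with hd_def
    have hd : 0 < d := by positivity
    have hball : ∀ w : ℂ, w ∈ closedBall z d → ‖w‖ ≤ 1 + β/4 := by
      intro w hw
      rw [mem_closedBall, dist_eq_norm] at hw
      calc ‖w‖ = ‖(w - z) + z‖ := by ring_nf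
        _ ≤ ‖w - z‖ + ‖z‖ := norm_add_le _ _
        _ ≤ d + 1 := by rw [hz] at *; linarith
        _ = 1 + β/4 := by rw [hd_def]; ring
    have hGdiff : DifferentiableOn ℂ G (closedBall z d) := by
      intro w hw
      refine DifferentiableAt.differentiableWithinAt ?_
      refine DifferentiableAt.fun_finsetProd fun k _ => ?_
      exact DifferentiableAt.div (by fun_prop) (by fun_prop) (hdenR w (hball w hw) k)
    have hGc : DiffContOnCl ℂ G (ball z d) := by
      refine DifferentiableOn.diffContOnCl ?_
      rw [closure_ball z hd.ne']
      exact hGdiff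
    have hρn : 1 - δ ≤ (1-β)^n := by
      have h := one_add_mul_le_pow (a := -β) (by linarith) n
      calc 1 - δ = 1 + (n:ℝ) * (-β) := by rw [← hnβ]; ring
        _ ≤ (1 + (-β))^n := h
        _ = (1 - β)^n := by rw [← sub_eq_add_neg]
    have hsup : ∀ w ∈ sphere z d, ‖G w‖ ≤ 2 := by
      intro w hw
      have hwn : ‖w‖ ≤ 1 + β/4 := hball w (sphere_subset_closedBall hw)
      rw [hG]
      simp only []
      rw [norm_prod]
      calc ∏ k, ‖(w - a k) / (1 - (ρ:ℂ) * (starRingEnd ℂ) (a k) * w)‖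
          ≤ ∏ _k : Fin n, (1+β) := by
            refine Finset.prod_le_prod (fun k _ => norm_nonneg _) (fun k _ => ?_)
            rw [norm_div, div_le_iff₀ (norm_pos_iff.mpr (hdenR w hwn k))]
            rw [hρdef]
            exact factor_sphere β hβ0 hβ2 (a k) w (ha k).le hwn
        _ = (1+β)^n := by rw [Finset.prod_const, Finset.card_fin]
        _ ≤ 2 := by
            have h1 : ((1+β) * (1-β))^n ≤ 1 := by
              refine pow_le_one₀ (by nlinarith) (by nlinarith)
            rw [mul_pow] at h1
            have h2 : (0:ℝ) < (1-β)^n := pow_pos (by linarith) n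
            have h3 : (1+β)^n ≤ 1/(1-β)^n := by
              rw [le_div_iff₀ h2]; exact h1
            have h4 : 1/(1-β)^n ≤ 1/(1-δ) := by
              apply one_div_le_one_div_of_le (by linarith) hρn
            have h5 : 1/(1-δ) ≤ 2 := by
              rw [div_le_iff₀ (by linarith : (0:ℝ) < 1-δ)]; linarith
            linarith
    have hcau := Complex.norm_deriv_le_of_forall_mem_sphere_norm_le hd hGc hsup
    calc ‖deriv G z‖ ≤ 2 / d := hcau
      _ = 8/δ * n := by
          rw [hd_def, hβdef]
          field_simp
          ring
end

section
/- There is an absolute constant C > 0 with the following property. Let n ≥ 1 and l ≥ 2 be integers, set R = 1 + 1/l, and let f be holomorphic on an open neighborhood of the closed disk {ζ : |ζ| ≤ R} with |f(ζ)| ≤ M for all |ζ| = R. Let T_n denote the Taylor polynomial of f at 0 of degree n. Then for every z with |z| = 1, |f(z) − T_n(z)| ≤ C·M·(log l)·(1 + 1/l)^{−n}. -/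
open Metric Finset Real MeasureTheory

lemma aux_int (a : ℝ) (ha : 0 < a) :
    ∫ θ in (0:ℝ)..π, (a + θ)⁻¹ = Real.log ((a + π) / a) := by
  have h : ∀ θ : ℝ, (a + θ)⁻¹ = (fun x : ℝ => x⁻¹) (θ + a) := fun θ => by rw [add_comm]
  rw [intervalIntegral.integral_congr (g := fun θ => (fun x : ℝ => x⁻¹) (θ + a)) (fun θ _ => h θ),
    intervalIntegral.integral_comp_add_right (fun x : ℝ => x⁻¹) a, zero_add,
    integral_inv (by
      rw [Set.uIcc_of_le (by linarith [Real.pi_pos])]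
      intro hc
      exact absurd (Set.mem_Icc.1 hc).1 (by linarith)), add_comm]

lemma aux_halfint (a α : ℝ) (ha : 0 < a) :
    ∫ θ in (α-π)..(α+π), (a + |θ - α|)⁻¹ = 2 * Real.log ((a+π)/a) := by
  have hcont : Continuous fun θ : ℝ => (a + |θ - α|)⁻¹ := by
    refine Continuous.inv₀ (by continuity) (fun θ => by positivity)
  have hint : ∀ b c : ℝ, IntervalIntegrable (fun θ => (a + |θ - α|)⁻¹) MeasureTheory.volume b c :=
    fun b c => hcont.intervalIntegrable b c
  have base : ∫ u in (0:ℝ)..π, (a + |u|)⁻¹ = Real.log ((a+π)/a) := by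
    rw [intervalIntegral.integral_congr (g := fun u => (a + u)⁻¹) (fun u hu => by
      rw [Set.uIcc_of_le Real.pi_pos.le] at hu
      rw [abs_of_nonneg (Set.mem_Icc.1 hu).1])]
    exact aux_int a ha
  have h2 : ∫ θ in α..(α+π), (a + |θ - α|)⁻¹ = Real.log ((a+π)/a) := by
    have := intervalIntegral.integral_comp_sub_right (a := α) (b := α + π)
      (fun u => (a + |u|)⁻¹) α
    simp only [sub_self, add_sub_cancel_left] at this
    rw [this, base]
  have h1 : ∫ θ in (α-π)..α, (a + |θ - α|)⁻¹ = Real.log ((a+π)/a) := by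
    have := intervalIntegral.integral_comp_sub_right (a := α - π) (b := α)
      (fun u => (a + |u|)⁻¹) α
    simp only [sub_self, sub_sub_cancel_left] at this
    rw [this]
    have hneg := intervalIntegral.integral_comp_neg (a := -π) (b := (0:ℝ))
      (fun u => (a + |u|)⁻¹)
    simp only [abs_neg, neg_zero, neg_neg] at hneg
    rw [hneg, base]
  rw [← intervalIntegral.integral_add_adjacent_intervals (hint (α-π) α) (hint α (α+π)), h1, h2]
  ring

lemma kernel_id (n : ℕ) {z ζ : ℂ} (hζ : ζ ≠ 0) (hne : ζ ≠ z) :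
    (ζ - z)⁻¹ = (∑ j ∈ Finset.range (n+1), (z/ζ)^j * ζ⁻¹) + (z/ζ)^(n+1) * (ζ - z)⁻¹ := by
  have hx : z/ζ ≠ 1 := fun h => hne ((div_eq_one_iff_eq hζ).1 h).symm
  rw [← Finset.sum_mul, geom_sum_eq hx]
  have h1 : ζ - z ≠ 0 := sub_ne_zero.2 hne
  have h2 : z/ζ - 1 ≠ 0 := sub_ne_zero.2 hx
  have key : ((z/ζ)^(n+1) - 1)/(z/ζ - 1) * ζ⁻¹ = (1 - (z/ζ)^(n+1)) * (ζ - z)⁻¹ := by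
    have hd : (z/ζ - 1) * ζ = z - ζ := by field_simp
    rw [← div_eq_mul_inv, div_div, hd, show z - ζ = -(ζ - z) by ring, div_neg, ← neg_div,
      neg_sub, div_eq_mul_inv]
  rw [key]
  ring

lemma aux_dist {ε δ : ℝ} (hε : 0 < ε) (hδ : |δ| ≤ π) :
    π * ε + |δ| ≤ 2 * π * ‖((1+ε : ℝ) : ℂ) * Complex.exp (δ * Complex.I) - 1‖ := by
  set N := ‖((1+ε : ℝ) : ℂ) * Complex.exp (δ * Complex.I) - 1‖ with hNdef
  have hN : 0 ≤ N := norm_nonneg _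
  have hsq : N^2 = (1+ε)^2 - 2*(1+ε)*Real.cos δ + 1 := by
    rw [hNdef, Complex.sq_norm, Complex.normSq_apply]
    simp only [Complex.sub_re, Complex.sub_im, Complex.mul_re, Complex.mul_im,
      Complex.ofReal_re, Complex.ofReal_im, Complex.exp_ofReal_mul_I_re,
      Complex.exp_ofReal_mul_I_im, Complex.one_re, Complex.one_im]
    nlinarith [Real.sin_sq_add_cos_sq δ]
  have hπ := Real.pi_pos
  have h1 : 2/π * (|δ|/2) ≤ Real.sin (|δ|/2) :=
    Real.mul_le_sin (by positivity) (by linarith)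
  have h2 : Real.sin (|δ|/2)^2 = 1/2 - Real.cos δ / 2 := by
    rw [Real.sin_sq_eq_half_sub, show 2*(|δ|/2) = |δ| by ring, Real.cos_abs]
  have h3 : (|δ|/π)^2 ≤ Real.sin (|δ|/2)^2 := by
    calc (|δ|/π)^2 = (2/π*(|δ|/2))^2 := by ring
      _ ≤ _ := pow_le_pow_left₀ (by positivity) h1 2
  have habs : |δ|^2 = δ^2 := sq_abs δ
  have h4 : |δ|^2/π^2 ≤ 1/2 - Real.cos δ/2 := by rw [← h2, ← div_pow]; exact h3
  rw [div_le_iff₀ (by positivity)] at h4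
  have hjordan : 2*δ^2 ≤ π^2*(1 - Real.cos δ) := by nlinarith [h4, habs]
  have hcos := Real.cos_le_one δ
  have key2 : (π*ε + |δ|)^2 ≤ (2*π*N)^2 := by
    nlinarith [abs_nonneg δ, sq_nonneg (π*ε - |δ|),
      mul_nonneg (sq_nonneg π) (mul_nonneg hε.le (sub_nonneg.2 hcos)), hjordan, hsq, habs]
  exact le_of_pow_le_pow_left₀ (by norm_num) (by positivity) key2

lemma circleIntegral_finset_sum {ι : Type*} (s : Finset ι) (g : ι → ℂ → ℂ) {c : ℂ} {R : ℝ}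
    (hg : ∀ i ∈ s, CircleIntegrable (g i) c R) :
    (∮ ζ in C(c, R), ∑ i ∈ s, g i ζ) = ∑ i ∈ s, ∮ ζ in C(c, R), g i ζ := by
  simp only [circleIntegral, Finset.smul_sum]
  exact intervalIntegral.integral_finset_sum (fun i hi => (hg i hi).out)


lemma tail_integral_bound {f : ℂ → ℂ} {M ε : ℝ} (n : ℕ) (hε : 0 < ε)
    (z : ℂ) (hz : ‖z‖ = 1)
    (hM : ∀ ζ : ℂ, ‖ζ‖ = 1 + ε → ‖f ζ‖ ≤ M) (hM0 : 0 ≤ M) :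
    ‖∮ ζ in C(0, 1+ε), (z/ζ)^(n+1) • (ζ-z)⁻¹ • f ζ‖ ≤
      (M / (1+ε)^n * (2*π)) * (2 * Real.log ((π*ε+π)/(π*ε))) := by
  have hπ := Real.pi_pos
  set R : ℝ := 1 + ε with hRdef
  have hR0 : 0 < R := by positivity
  set α : ℝ := z.arg with hαdef
  set T : ℂ → ℂ := fun ζ => (z/ζ)^(n+1) • (ζ-z)⁻¹ • f ζ with hTdef
  have hzexp : Complex.exp (α * Complex.I) = z := by
    have h1 : ‖z‖ = 1 := hz
    conv_rhs => rw [← Complex.norm_mul_exp_arg_mul_I z]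
    rw [h1, Complex.ofReal_one, one_mul]
  have hFper : Function.Periodic
      (fun θ => deriv (circleMap 0 R) θ • T (circleMap 0 R θ)) (2*π) := by
    intro θ
    simp only [deriv_circleMap, periodic_circleMap 0 R θ]
  have hshift : (∮ ζ in C(0, R), T ζ) = ∫ θ in (α-π)..(α+π),
      deriv (circleMap 0 R) θ • T (circleMap 0 R θ) := by
    rw [circleIntegral, show (2*π : ℝ) = 0 + 2*π by ring,
      hFper.intervalIntegral_add_eq 0 (α-π), show α - π + 2*π = α + π by ring]
  set G : ℝ → ℝ := fun θ => (M / R^n * (2*π)) * (π*ε + |θ - α|)⁻¹ with hGdef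
  have hGcont : Continuous G :=
    continuous_const.mul (Continuous.inv₀ (by continuity) (fun θ => by positivity))
  have hpoint : ∀ θ ∈ Set.uIoc (α-π) (α+π),
      ‖deriv (circleMap 0 R) θ • T (circleMap 0 R θ)‖ ≤ G θ := by
    intro θ hθ
    rw [Set.uIoc_of_le (by linarith)] at hθ
    have hδ : |θ - α| ≤ π := abs_le.2 ⟨by linarith [hθ.1], by linarith [hθ.2]⟩
    have ha : 0 < π*ε + |θ - α| := by positivity
    set ζ := circleMap 0 R θ with hζdef
    have hζnorm : ‖ζ‖ = R := by
      rw [hζdef, norm_circleMap_zero, abs_of_pos hR0]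
    have hfζ : ‖f ζ‖ ≤ M := hM ζ hζnorm
    have hζz : ζ - z = Complex.exp (α * Complex.I) *
        (((1+ε : ℝ) : ℂ) * Complex.exp (((θ - α : ℝ) : ℂ) * Complex.I) - 1) := by
      rw [hζdef, circleMap_zero,
        show ((θ:ℝ):ℂ) * Complex.I = (α:ℝ)*Complex.I + ((θ-α:ℝ):ℂ)*Complex.I by push_cast; ring,
        Complex.exp_add, hzexp, hRdef]
      push_cast
      ring
    have hdist : π*ε + |θ - α| ≤ 2*π*‖ζ - z‖ := by
      rw [hζz, norm_mul, Complex.norm_exp_ofReal_mul_I, one_mul]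
      exact aux_dist hε hδ
    have hζzpos : 0 < ‖ζ - z‖ := by nlinarith [abs_nonneg (θ - α)]
    have hinv : ‖ζ - z‖⁻¹ ≤ 2*π / (π*ε + |θ - α|) := by
      rw [inv_eq_one_div, div_le_div_iff₀ hζzpos ha]
      linarith
    have hnorm : ‖deriv (circleMap 0 R) θ • T ζ‖
        = R * ((1/R)^(n+1) * (‖ζ - z‖⁻¹ * ‖f ζ‖)) := by
      rw [deriv_circleMap]
      simp only [hTdef, norm_smul, norm_mul, norm_pow, norm_div, norm_inv,
        Complex.norm_I, mul_one, hz, hζnorm]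
      rw [← hζdef, hζnorm]
    calc ‖deriv (circleMap 0 R) θ • T ζ‖
        = R * ((1/R)^(n+1) * (‖ζ - z‖⁻¹ * ‖f ζ‖)) := hnorm
      _ ≤ R * ((1/R)^(n+1) * ((2*π / (π*ε + |θ - α|)) * M)) := by
          gcongr
      _ = G θ := by
          rw [hGdef]
          have hR0' : R ≠ 0 := hR0.ne'
          field_simp
          ring_nf
          field_simp
          rw [← mul_pow, mul_one_div_cancel hR0', one_pow, one_mul]
  calc ‖∮ ζ in C(0, R), T ζ‖
      = ‖∫ θ in (α-π)..(α+π), deriv (circleMap 0 R) θ • T (circleMap 0 R θ)‖ := by rw [hshift]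
    _ ≤ |∫ θ in (α-π)..(α+π), G θ| :=
        intervalIntegral.norm_integral_le_abs_of_norm_le
          ((ae_restrict_mem measurableSet_uIoc).mono hpoint) (hGcont.intervalIntegrable _ _)
    _ = |(M / R^n * (2*π)) * (2 * Real.log ((π*ε+π)/(π*ε)))| := by
        rw [hGdef, intervalIntegral.integral_const_mul, aux_halfint (π*ε) α (by positivity)]
    _ = (M / R^n * (2*π)) * (2 * Real.log ((π*ε+π)/(π*ε))) := by
        apply abs_of_nonneg
        have hlog : 0 ≤ Real.log ((π*ε+π)/(π*ε)) := by
          apply Real.log_nonneg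
          rw [le_div_iff₀ (by positivity)]
          linarith
        positivity


set_option maxHeartbeats 1000000 in
/-- There is an absolute constant `C > 0` such that if `f` is holomorphic on a
neighborhood of the closed disk of radius `R = 1 + 1/l` (`l ≥ 2`) and bounded by `M`
on the circle of radius `R`, then the degree-`n` Taylor polynomial `T_n` of `f` at `0`
satisfies `|f(z) - T_n(z)| ≤ C M (log l) (1 + 1/l)^{-n}` on the unit circle. -/
theorem taylor_tail_bound :
    ∃ C > (0 : ℝ), ∀ n : ℕ, 1 ≤ n → ∀ l : ℕ, 2 ≤ l → ∀ M : ℝ, ∀ f : ℂ → ℂ,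
      (∃ U : Set ℂ, IsOpen U ∧ closedBall (0 : ℂ) (1 + 1 / l) ⊆ U ∧
        DifferentiableOn ℂ f U) →
      (∀ ζ : ℂ, ‖ζ‖ = 1 + 1 / (l : ℝ) → ‖f ζ‖ ≤ M) →
      ∀ z : ℂ, ‖z‖ = 1 →
        ‖f z - ∑ j ∈ range (n + 1), (iteratedDeriv j f 0 / (j.factorial : ℂ)) * z ^ j‖ ≤
          C * M * Real.log l / (1 + 1 / (l : ℝ)) ^ n := by
  refine ⟨16, by norm_num, ?_⟩
  intro n hn l hl M f hEx hM z hz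
  obtain ⟨U, hUo, hUsub, hUd⟩ := hEx
  have hπ := Real.pi_pos
  have hl2 : (2:ℝ) ≤ (l:ℝ) := by exact_mod_cast hl
  have hl0 : (0:ℝ) < l := by linarith
  set ε : ℝ := 1/(l:ℝ) with hεdef
  have hε : 0 < ε := by positivity
  set R : ℝ := 1 + ε with hRdef
  have hR0 : 0 < R := by positivity
  have hR1 : 1 < R := by simp only [hRdef]; linarith
  have hd : DifferentiableOn ℂ f (closedBall 0 R) := hUd.mono hUsub
  have hM0 : 0 ≤ M := le_trans (norm_nonneg _)
    (hM (R:ℂ) (by rw [Complex.norm_real, Real.norm_eq_abs, abs_of_pos hR0]))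
  -- power series
  obtain ⟨Rn, hRn⟩ : ∃ Rn : NNReal, (Rn : ℝ) = R := ⟨⟨R, hR0.le⟩, rfl⟩
  have hRnpos : 0 < Rn := by
    have : (0:ℝ) < (Rn:ℝ) := by rw [hRn]; exact hR0
    exact_mod_cast this
  have hp : HasFPowerSeriesOnBall f (cauchyPowerSeries f 0 R) 0 (Rn : ENNReal) := by
    rw [← hRn] at hd ⊢
    exact DifferentiableOn.hasFPowerSeriesOnBall hd hRnpos
  have hcoeff : ∀ j : ℕ, iteratedDeriv j f 0 / (j.factorial : ℂ)
      = cauchyPowerSeries f 0 R j (fun _ => 1) := by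
    intro j
    have h := hp.factorial_smul (1:ℂ) j
    rw [iteratedDeriv_eq_iteratedFDeriv, ← h, nsmul_eq_mul]
    exact mul_div_cancel_left₀ _ (by exact_mod_cast j.factorial_ne_zero)
  have hterm : ∀ j : ℕ, (iteratedDeriv j f 0 / (j.factorial:ℂ)) * z^j
      = (2*(π:ℝ)*Complex.I:ℂ)⁻¹ • ∮ ζ in C(0,R), (z/ζ)^j • ζ⁻¹ • f ζ := by
    intro j
    rw [hcoeff j]
    have h1 := cauchyPowerSeries_apply f 0 R j z
    simp only [sub_zero] at h1
    rw [← h1]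
    simp only [cauchyPowerSeries, ContinuousMultilinearMap.mkPiRing_apply, Fin.prod_const,
      one_pow, smul_eq_mul, one_mul]
    ring
  -- Cauchy formula
  have hzball : z ∈ ball (0:ℂ) R := mem_ball_zero_iff.2 (by rw [hz]; exact hR1)
  have hcauchy := Complex.two_pi_I_inv_smul_circleIntegral_sub_inv_smul_of_differentiable_on_off_countable
    Set.countable_empty hzball hd.continuousOn
    (fun x hx => hUd.differentiableAt (hUo.mem_nhds (hUsub (ball_subset_closedBall hx.1))))
  -- sphere facts
  have hsph : ∀ ζ ∈ sphere (0:ℂ) R, ‖ζ‖ = R := fun ζ hζ => mem_sphere_zero_iff_norm.1 hζ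
  have hζ0 : ∀ ζ ∈ sphere (0:ℂ) R, ζ ≠ 0 := by
    intro ζ hζ h
    have := hsph ζ hζ
    rw [h, norm_zero] at this
    linarith
  have hζz : ∀ ζ ∈ sphere (0:ℂ) R, ζ ≠ z := by
    intro ζ hζ h
    have := hsph ζ hζ
    rw [h, hz] at this
    linarith
  have hfc : ContinuousOn f (sphere 0 R) := hd.continuousOn.mono sphere_subset_closedBall
  have hKc : ∀ j : ℕ, ContinuousOn (fun ζ : ℂ => (z/ζ)^j • ζ⁻¹ • f ζ) (sphere 0 R) := by
    intro j
    exact ((continuousOn_const.div continuousOn_id (hζ0)).pow j).smul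
      ((continuousOn_id.inv₀ hζ0).smul hfc)
  have hKint : ∀ j ∈ range (n+1), CircleIntegrable (fun ζ : ℂ => (z/ζ)^j • ζ⁻¹ • f ζ) 0 R :=
    fun j _ => (hKc j).circleIntegrable hR0.le
  have hSumint : CircleIntegrable (fun ζ : ℂ => ∑ j ∈ range (n+1), (z/ζ)^j • ζ⁻¹ • f ζ) 0 R :=
    ContinuousOn.circleIntegrable hR0.le (continuousOn_finset_sum _ (fun j _ => hKc j))
  have hCint : CircleIntegrable (fun ζ : ℂ => (ζ - z)⁻¹ • f ζ) 0 R :=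
    ContinuousOn.circleIntegrable hR0.le
      (((continuousOn_id.sub continuousOn_const).inv₀
        (fun ζ hζ => sub_ne_zero.2 (hζz ζ hζ))).smul hfc)
  have hkey : f z - ∑ j ∈ range (n+1), (iteratedDeriv j f 0 / (j.factorial:ℂ)) * z^j
      = (2*(π:ℝ)*Complex.I:ℂ)⁻¹ • ∮ ζ in C(0,R), (z/ζ)^(n+1) • (ζ-z)⁻¹ • f ζ := by
    calc f z - ∑ j ∈ range (n+1), (iteratedDeriv j f 0 / (j.factorial:ℂ)) * z^j
        = (2*(π:ℝ)*Complex.I:ℂ)⁻¹ • (∮ ζ in C(0,R), (ζ-z)⁻¹ • f ζ)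
          - ∑ j ∈ range (n+1), (2*(π:ℝ)*Complex.I:ℂ)⁻¹ •
              ∮ ζ in C(0,R), (z/ζ)^j • ζ⁻¹ • f ζ := by
          rw [← hcauchy]
          congr 1
          exact Finset.sum_congr rfl (fun j _ => hterm j)
      _ = (2*(π:ℝ)*Complex.I:ℂ)⁻¹ • ((∮ ζ in C(0,R), (ζ-z)⁻¹ • f ζ)
            - ∮ ζ in C(0,R), ∑ j ∈ range (n+1), (z/ζ)^j • ζ⁻¹ • f ζ) := by
          rw [circleIntegral_finset_sum _ _ hKint, smul_sub, Finset.smul_sum]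
      _ = (2*(π:ℝ)*Complex.I:ℂ)⁻¹ • (∮ ζ in C(0,R),
            ((ζ-z)⁻¹ • f ζ - ∑ j ∈ range (n+1), (z/ζ)^j • ζ⁻¹ • f ζ)) := by
          rw [circleIntegral.integral_sub hCint hSumint]
      _ = (2*(π:ℝ)*Complex.I:ℂ)⁻¹ • ∮ ζ in C(0,R), (z/ζ)^(n+1) • (ζ-z)⁻¹ • f ζ := by
          congr 1
          refine circleIntegral.integral_congr hR0.le (fun ζ hζ => ?_)
          have h0 := hζ0 ζ hζ
          have hzz := hζz ζ hζ
          have hk := kernel_id n h0 hzz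
          simp only [smul_eq_mul]
          have hsum : ∑ j ∈ range (n+1), (z/ζ)^j * (ζ⁻¹ * f ζ)
              = (∑ j ∈ range (n+1), (z/ζ)^j * ζ⁻¹) * f ζ := by
            rw [Finset.sum_mul]
            exact Finset.sum_congr rfl (fun j _ => by ring)
          rw [hsum]
          linear_combination (f ζ) * hk
  rw [hkey, norm_smul]
  have hInorm : ‖((2*(π:ℝ)*Complex.I:ℂ))⁻¹‖ = (2*π)⁻¹ := by
    rw [norm_inv, norm_mul, norm_mul, Complex.norm_I, mul_one, Complex.norm_real,
      Real.norm_eq_abs, abs_of_pos hπ]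
    norm_num
  rw [hInorm]
  have htail := tail_integral_bound n hε z hz (fun ζ h => hM ζ h) hM0
  have harg : (π*ε+π)/(π*ε) = (l:ℝ)+1 := by
    rw [hεdef]
    field_simp
    ring
  rw [harg] at htail
  have hlog2 : Real.log ((l:ℝ)+1) ≤ 2*Real.log l := by
    have h1 : (l:ℝ)+1 ≤ (l:ℝ)^2 := by nlinarith
    calc Real.log ((l:ℝ)+1) ≤ Real.log ((l:ℝ)^2) := Real.log_le_log (by positivity) h1
      _ = 2*Real.log l := by rw [Real.log_pow]; norm_num
  have hlogpos : 0 ≤ Real.log l := Real.log_nonneg (by linarith)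
  calc (2*π)⁻¹ * ‖∮ ζ in C(0,R), (z/ζ)^(n+1) • (ζ-z)⁻¹ • f ζ‖
      ≤ (2*π)⁻¹ * ((M / R^n * (2*π)) * (2 * Real.log ((l:ℝ)+1))) := by
        apply mul_le_mul_of_nonneg_left _ (by positivity)
        exact htail
    _ = (M / R^n) * (2 * Real.log ((l:ℝ)+1)) := by
        field_simp
    _ ≤ (M / R^n) * (4 * Real.log l) := by
        apply mul_le_mul_of_nonneg_left _ (by positivity)
        linarith
    _ ≤ 16 * M * Real.log l / R ^ n := by
        rw [show (M / R^n) * (4 * Real.log l) = 4*(M * Real.log l / R^n) by ring,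
          show (16:ℝ) * M * Real.log l / R^n = 16*(M * Real.log l / R^n) by ring]
        exact mul_le_mul_of_nonneg_right (by norm_num) (by positivity)
end
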